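/- For every list S over Γ, every index i < 2·|S| + 1, and every element c : Option Γ, the sentence obtained by one replacement in the expanded sentence is within Levenshtein distance 1 of S: d_lev(S, ψ((φ(S)).set i c)) ≤ 1. -/

import Mathlib

/-!
Position `2k` of `phi S` is a separator `none` and position `2k + 1` holds `some S[k]`.
Overwriting a separator therefore inserts at most one character into `S`, and overwriting a
character substitutes or deletes it; in each case `psi` returns a sentence one edit away from `S`.
-/

/-- The expansion map: insert the special symbol `ξ` (encoded as `none`)
before and after every character of `S`. -/
def phi {Γ : Type*} (S : List Γ) : List (Option Γ) :=
  none :: S.flatMap (fun c => [some c, none])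

/-- The contraction map: remove all occurrences of `ξ` (encoded as `none`). -/
def psi {Γ : Type*} (T : List (Option Γ)) : List Γ :=
  T.filterMap id

/-- Mathlib's former `Levenshtein.Cost` (removed from Mathlib), restored verbatim. -/
structure Levenshtein.Cost (α β δ : Type*) where
  delete : α → δ
  insert : β → δ
  substitute : α → β → δ

/-- Mathlib's former `Levenshtein.defaultCost`, restored verbatim. -/
def Levenshtein.defaultCost {α : Type*} [DecidableEq α] : Levenshtein.Cost α α ℕ where
  delete _ := 1
  insert _ := 1
  substitute a b := if a = b then 0 else 1

/-- Mathlib's former `Levenshtein.impl`, restored. -/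
def Levenshtein.impl {α β δ : Type*} [AddZeroClass δ] [Min δ] (C : Levenshtein.Cost α β δ)
    (xs : List α) (y : β) (d : {r : List δ // 0 < r.length}) : {r : List δ // 0 < r.length} :=
  let ⟨ds, w⟩ := d
  xs.zip (ds.zip ds.tail) |>.foldr
    (init := ⟨[C.insert y + ds.getLast (List.ne_nil_of_length_pos w)], by simp⟩)
    (fun ⟨x, d₀, d₁⟩ ⟨r, w⟩ =>
      ⟨min (C.delete x + r[0]) (min (C.insert y + d₀) (C.substitute x y + d₁)) :: r, by simp⟩)

/-- Mathlib's former `suffixLevenshtein`, restored. -/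
def suffixLevenshtein {α β δ : Type*} [AddZeroClass δ] [Min δ] (C : Levenshtein.Cost α β δ)
    (xs : List α) (ys : List β) : {r : List δ // 0 < r.length} :=
  ys.foldr
    (Levenshtein.impl C xs)
    (xs.foldr (init := ⟨[0], by simp⟩) (fun a ⟨r, w⟩ => ⟨(C.delete a + r[0]) :: r, by simp⟩))

/-- Mathlib's former `levenshtein`, restored. -/
def levenshtein {α β δ : Type*} [AddZeroClass δ] [Min δ] (C : Levenshtein.Cost α β δ)
    (xs : List α) (ys : List β) : δ :=
  let ⟨r, w⟩ := suffixLevenshtein C xs ys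
  r[0]

/-- The Levenshtein (edit) distance with unit costs. -/
def dlev {Γ : Type*} [DecidableEq Γ] (S S' : List Γ) : ℕ :=
  levenshtein Levenshtein.defaultCost S S'


namespace Levenshtein

variable {α β δ : Type*} [AddZeroClass δ] [Min δ] (C : Cost α β δ)

theorem impl_cons (x : α) (xs : List α) (y : β) (d : δ) (ds : List δ)
    (w : 0 < (d :: ds).length) (w' : 0 < ds.length) :
    impl C (x :: xs) y ⟨d :: ds, w⟩ =
      let ⟨r, w⟩ := impl C xs y ⟨ds, w'⟩
      ⟨min (C.delete x + r[0]) (min (C.insert y + d) (C.substitute x y + ds[0])) :: r, by simp⟩ :=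
  match ds, w' with | _ :: _, _ => rfl

theorem impl_cons_fst (x : α) (xs : List α) (y : β) (d : δ) (ds : List δ)
    (w : 0 < (d :: ds).length) (w' : 0 < ds.length) :
    (impl C (x :: xs) y ⟨d :: ds, w⟩).1 =
      min (C.delete x + (impl C xs y ⟨ds, w'⟩).1.headD 0)
        (min (C.insert y + d) (C.substitute x y + ds.headD 0)) ::
        (impl C xs y ⟨ds, w'⟩).1 := by
  rw [impl_cons (w' := w')]
  obtain _ | ⟨d₂, ds⟩ := ds
  · simp at w'
  · generalize impl C xs y ⟨d₂ :: ds, w'⟩ = s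
    obtain ⟨_ | ⟨a, r⟩, hs⟩ := s
    · simp at hs
    · rfl

theorem impl_length (xs : List α) (y : β) (d : {r : List δ // 0 < r.length})
    (w : d.1.length = xs.length + 1) :
    (impl C xs y d).1.length = xs.length + 1 := by
  induction xs generalizing d with
  | nil => rfl
  | cons x xs ih =>
    match d, w with
    | ⟨d₁ :: d₂ :: ds, _⟩, w =>
      rw [impl_cons (w' := by simp)]
      simpa using ih ⟨d₂ :: ds, by simp⟩ (by simpa using w)

end Levenshtein

section Recurrence

open Levenshtein

variable {α β δ : Type*} [AddZeroClass δ] [Min δ] (C : Cost α β δ)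

theorem suffixLevenshtein_length (xs : List α) (ys : List β) :
    (suffixLevenshtein C xs ys).1.length = xs.length + 1 := by
  induction ys with
  | nil =>
    dsimp only [suffixLevenshtein, List.foldr_nil]
    induction xs with
    | nil => rfl
    | cons _ xs ih => simp_all
  | cons y ys ih => exact impl_length C xs y _ ih

theorem levenshtein_eq_headD (xs : List α) (ys : List β) :
    levenshtein C xs ys = (suffixLevenshtein C xs ys).1.headD 0 := by
  unfold levenshtein
  generalize suffixLevenshtein C xs ys = s
  obtain ⟨_ | ⟨a, r⟩, hs⟩ := s
  · simp at hs
  · rfl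

theorem suffixLevenshtein_cons₁ (x : α) (xs : List α) (ys : List β) :
    suffixLevenshtein C (x :: xs) ys =
      ⟨levenshtein C (x :: xs) ys :: (suffixLevenshtein C xs ys).1, by simp⟩ := by
  induction ys with
  | nil => rfl
  | cons y ys ih =>
    have ext_of_head_tail : ∀ {a b : {r : List δ // 0 < r.length}},
        a.1[0]'a.2 = b.1[0]'b.2 → a.1.tail = b.1.tail → a = b
      | ⟨_ :: _, _⟩, ⟨_ :: _, _⟩, h₀, h => by simp_all
    refine ext_of_head_tail rfl ?_
    change (impl C (x :: xs) y (suffixLevenshtein C (x :: xs) ys)).1.tail = _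
    rw [ih, impl_cons (w' := by simp [suffixLevenshtein_length])]
    rfl

theorem levenshtein_cons_cons (x : α) (xs : List α) (y : β) (ys : List β) :
    levenshtein C (x :: xs) (y :: ys) =
      min (C.delete x + levenshtein C xs (y :: ys))
        (min (C.insert y + levenshtein C (x :: xs) ys)
          (C.substitute x y + levenshtein C xs ys)) := by
  rw [levenshtein_eq_headD C (x :: xs) (y :: ys)]
  change ((impl C (x :: xs) y (suffixLevenshtein C (x :: xs) ys)).1.headD 0) = _
  rw [suffixLevenshtein_cons₁ C x xs ys, impl_cons_fst (w' := (suffixLevenshtein C xs ys).2),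
    levenshtein_eq_headD C xs (y :: ys), levenshtein_eq_headD C xs ys]
  rfl

end Recurrence

section EditDistance

variable {Γ : Type*} [DecidableEq Γ]

theorem dlev_cons_cons (x y : Γ) (xs ys : List Γ) :
    dlev (x :: xs) (y :: ys) =
      min (1 + dlev xs (y :: ys))
        (min (1 + dlev (x :: xs) ys) ((if x = y then 0 else 1) + dlev xs ys)) :=
  levenshtein_cons_cons _ x xs y ys

theorem dlev_self (S : List Γ) : dlev S S = 0 := by
  induction S with
  | nil => rfl
  | cons a S ih =>
    rw [dlev_cons_cons]
    simp [ih]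

theorem dlev_cons_cons_le (a : Γ) (S T : List Γ) : dlev (a :: S) (a :: T) ≤ dlev S T := by
  rw [dlev_cons_cons]
  simp

theorem dlev_cons_right_le_one (a : Γ) (S : List Γ) : dlev S (a :: S) ≤ 1 := by
  cases S with
  | nil => rfl
  | cons b S =>
    rw [dlev_cons_cons, dlev_self]
    omega

theorem dlev_cons_left_le_one (a : Γ) (S : List Γ) : dlev (a :: S) S ≤ 1 := by
  cases S with
  | nil => rfl
  | cons b S =>
    rw [dlev_cons_cons, dlev_self]
    omega

theorem dlev_cons_cons_le_one (a b : Γ) (S : List Γ) : dlev (a :: S) (b :: S) ≤ 1 := by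
  rw [dlev_cons_cons, dlev_self]
  split <;> omega

theorem dlev_toList_append_le_one (c : Option Γ) (S : List Γ) :
    dlev S (c.toList ++ S) ≤ 1 := by
  cases c with
  | none => simp [dlev_self]
  | some a => exact dlev_cons_right_le_one a S

theorem dlev_cons_toList_append_le_one (a : Γ) (c : Option Γ) (S : List Γ) :
    dlev (a :: S) (c.toList ++ S) ≤ 1 := by
  cases c with
  | none => exact dlev_cons_left_le_one a S
  | some b => exact dlev_cons_cons_le_one a b S

end EditDistance

section Expansion

variable {Γ : Type*}

theorem phi_cons (a : Γ) (S : List Γ) : phi (a :: S) = none :: some a :: phi S := rfl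

@[simp]
theorem psi_nil : psi ([] : List (Option Γ)) = [] := rfl

@[simp]
theorem psi_cons (c : Option Γ) (T : List (Option Γ)) : psi (c :: T) = c.toList ++ psi T := by
  cases c <;> rfl

@[simp]
theorem psi_phi (S : List Γ) : psi (phi S) = S := by
  induction S with
  | nil => rfl
  | cons a S ih => simpa [phi_cons] using ih

end Expansion

theorem dlev_set_phi_le_one_general {Γ : Type*} [DecidableEq Γ] (S : List Γ)
    (i : ℕ) (c : Option Γ) :
    dlev S (psi ((phi S).set i c)) ≤ 1 := by
  induction S generalizing i with
  | nil =>
    rcases i with _ | i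
    · simpa [phi] using dlev_toList_append_le_one c []
    · simp [phi, dlev_self]
  | cons a S ih =>
    rw [phi_cons]
    rcases i with _ | _ | i
    · simpa using dlev_toList_append_le_one c (a :: S)
    · simpa using dlev_cons_toList_append_le_one a c S
    · simpa using (dlev_cons_cons_le a S _).trans (ih i)

/-- One replacement in the expanded sentence stays within Levenshtein distance 1. -/
theorem dlev_set_phi_le_one {Γ : Type*} [DecidableEq Γ] (S : List Γ)
    (i : ℕ) (hi : i < 2 * S.length + 1) (c : Option Γ) :
    dlev S (psi ((phi S).set i c)) ≤ 1 :=
  dlev_set_phi_le_one_general S i c
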